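/- Let d ≥ 1 and let 0 ≤ β with β·d < 1. Then for every a priori probability measure α on {-1,0,1}, the soft-core Widom-Rowlinson model on ℤ^d satisfies the Dobrushin condition: c(γ) = sup_{i∈ℤ^d} Σ_{j≠i} C_{ij}(γ) < 1, where C_{ij}(γ) is the Dobrushin interdependence matrix of the single-site specification kernels γ_{{i}}(σ|ω) ∝ α(σ) exp(−β Σ_{j: |i−j|₁ = 1} 1[σ ω_j = −1]). -/

import Mathlib

open Real Filter Finset Topology

/-- The local state space `{-1, 0, 1}` of the Widom-Rowlinson model. -/
abbrev Spin : Finset ℤ := {-1, 0, 1}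

/-- A probability vector on `{-1, 0, 1}`, encoded as a function `ℤ → ℝ`
supported on `{-1, 0, 1}`. -/
def IsProbVec (ν : ℤ → ℝ) : Prop :=
  (∀ s, 0 ≤ ν s) ∧ (∀ s, s ∉ Spin → ν s = 0) ∧ ∑ s ∈ Spin, ν s = 1

/-- The site space `ℤ^d`. -/
abbrev Site (d : ℕ) := Fin d → ℤ

/-- The number of nearest neighbors `j ∼ i` of site `i` whose spin `ω j` clashes
with the spin value `σ` at `i` (i.e. `σ · ω j = -1`). The neighbors of `i` are
exactly the sites `i ± e_k`, `k = 1, …, d`. -/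
noncomputable def clashCount {d : ℕ} (i : Site d) (σ : ℤ) (ω : Site d → Spin) : ℝ :=
  ∑ k : Fin d, ∑ ε ∈ ({-1, 1} : Finset ℤ),
    (if σ * (ω (Function.update i k (i k + ε)) : ℤ) = -1 then (1 : ℝ) else 0)

/-- The single-site specification kernel of the soft-core Widom-Rowlinson model on
`ℤ^d`: `γ_{{i}}(σ | ω) ∝ α(σ) exp(-β · #{j ∼ i : σ ω_j = -1})`. -/
noncomputable def scKernel (β : ℝ) (α : ℤ → ℝ) {d : ℕ} (i : Site d)
    (ω : Site d → Spin) (σ : ℤ) : ℝ :=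
  α σ * Real.exp (-β * clashCount i σ ω) /
    ∑ σ' ∈ Spin, α σ' * Real.exp (-β * clashCount i σ' ω)

/-- Total variational distance between two probability vectors on `{-1, 0, 1}`. -/
noncomputable def tvDist (p q : ℤ → ℝ) : ℝ := (1 / 2) * ∑ s ∈ Spin, |p s - q s|

/-- The Dobrushin interdependence matrix
`C_{ij}(γ) = sup { ‖γ_{{i}}(·|ω) - γ_{{i}}(·|η)‖_TV : ω = η off j }`. -/
noncomputable def dobMatrix (β : ℝ) (α : ℤ → ℝ) {d : ℕ} (i j : Site d) : ℝ :=
  sSup {r : ℝ | ∃ ω η : Site d → Spin, (∀ k, k ≠ j → ω k = η k) ∧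
    r = tvDist (scKernel β α i ω) (scKernel β α i η)}

/-- The Dobrushin constant `c(γ) = sup_i Σ_{j ≠ i} C_{ij}(γ)`. -/
noncomputable def dobConstant (β : ℝ) (α : ℤ → ℝ) (d : ℕ) : ℝ :=
  ⨆ i : Site d, ∑' j : Site d, if j = i then 0 else dobMatrix β α i j


/-!
Changing the spin at a single site `j` changes each clash count at `i` by at most one, and not at
all unless `j` is one of the `2d` neighbours of `i`. Hence the two conditional distributions
differ by a tilt whose logarithm oscillates by at most `2β`, and a tilt of log-oscillation `L`
moves a probability vector by at most `tanh (L / 4) ≤ L / 4` in total variation. So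
`C_{ij} ≤ β / 2` for neighbours, `C_{ij} = 0` otherwise, and `c(γ) ≤ 2d · β / 2 = β d < 1`.
-/

theorem exp_sub_one_le_half_mul_exp_add_one {t : ℝ} (ht : 0 ≤ t) :
    exp t - 1 ≤ t / 2 * (exp t + 1) := by
  have hmono : Monotone fun x => x / 2 * (exp x + 1) - (exp x - 1) := by
    refine monotone_of_hasDerivAt_nonneg (f' := fun x => (1 - exp x + x * exp x) / 2)
      (fun x => ?_) (fun x => ?_)
    · exact ((((hasDerivAt_id' x).div_const 2).mul ((hasDerivAt_exp x).add_const 1)).sub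
        ((hasDerivAt_exp x).sub_const 1)).congr_deriv (by ring)
    · -- `1 - eˣ + x eˣ = eˣ (e⁻ˣ - (1 - x)) ≥ 0`
      have h := mul_le_mul_of_nonneg_left (add_one_le_exp (-x)) (exp_pos x).le
      rw [mul_add, ← exp_add, add_neg_cancel, exp_zero] at h
      show 0 ≤ (1 - exp x + x * exp x) / 2
      linarith
  simpa using hmono ht

section TiltedProbability

variable {ι : Type*} {s : Finset ι} {p q : ι → ℝ} {m M : ℝ}

/-- The chord of `x ↦ |x - 1|` over `[m, M]` dominates it, and its `p`-mean is the right side. -/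
theorem sub_mul_sum_abs_sub_le (hp : ∀ i ∈ s, 0 ≤ p i) (hp1 : ∑ i ∈ s, p i = 1)
    (hq1 : ∑ i ∈ s, q i = 1) (hm : ∀ i ∈ s, m * p i ≤ q i) (hM : ∀ i ∈ s, q i ≤ M * p i) :
    (M - m) * ∑ i ∈ s, |p i - q i| ≤ 2 * (1 - m) * (M - 1) := by
  have hm1 : m ≤ 1 := by
    simpa only [← mul_sum, hp1, hq1, mul_one] using sum_le_sum hm
  have hM1 : 1 ≤ M := by
    simpa only [← mul_sum, hp1, hq1, mul_one] using sum_le_sum hM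
  calc (M - m) * ∑ i ∈ s, |p i - q i| = ∑ i ∈ s, (M - m) * |p i - q i| := mul_sum _ _ _
    _ ≤ ∑ i ∈ s, ((1 - m) * (M * p i - q i) + (M - 1) * (q i - m * p i)) := by
      refine sum_le_sum fun i hi => ?_
      have := hp i hi
      have := hm i hi
      have := hM i hi
      rcases abs_cases (p i - q i) with ⟨h, -⟩ | ⟨h, -⟩ <;> rw [h] <;> nlinarith
    _ = 2 * (1 - m) * (M - 1) := by
      rw [sum_add_distrib, ← mul_sum, ← mul_sum, sum_sub_distrib, sum_sub_distrib, ← mul_sum,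
        ← mul_sum, hp1, hq1]
      ring

theorem sum_abs_sub_le_of_mul_le_of_le_mul_exp {L : ℝ} (hp : ∀ i ∈ s, 0 ≤ p i)
    (hp1 : ∑ i ∈ s, p i = 1) (hq1 : ∑ i ∈ s, q i = 1) (hm0 : 0 < m) (hL : 0 ≤ L)
    (hm : ∀ i ∈ s, m * p i ≤ q i) (hM : ∀ i ∈ s, q i ≤ m * exp L * p i) :
    ∑ i ∈ s, |p i - q i| ≤ L / 2 := by
  have hchord := sub_mul_sum_abs_sub_le hp hp1 hq1 hm hM
  rcases hL.eq_or_lt with rfl | hL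
  · rw [exp_zero, mul_one] at hchord hM
    have hm1 : m = 1 := by nlinarith
    subst hm1
    have hpq : ∀ i ∈ s, p i - q i = 0 := fun i hi => by
      linarith [hm i hi, hM i hi]
    rw [zero_div]
    exact (sum_eq_zero fun i hi => by rw [hpq i hi, abs_zero]).le
  · set u := exp (L / 2)
    have hu : exp L = u ^ 2 := by rw [← exp_nat_mul]; ring_nf
    have hu1 : 1 < u := one_lt_exp_iff.2 (by positivity)
    have htanh : u - 1 ≤ L / 4 * (u + 1) := by
      have := exp_sub_one_le_half_mul_exp_add_one (t := L / 2) (by positivity)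
      linarith
    have hMm : 0 < m * exp L - m := by
      nlinarith [mul_pos hm0 (sub_pos.2 (one_lt_exp_iff.2 hL))]
    refine le_of_mul_le_mul_left (hchord.trans ?_) hMm
    -- `(1 - m)(m u² - 1) ≤ m (u - 1)²` is AM-GM for `1 + m²u² ≥ 2mu`.
    rw [hu]
    nlinarith [sq_nonneg (m * u - 1),
      mul_le_mul_of_nonneg_left htanh (by positivity : (0 : ℝ) ≤ m * (u - 1))]

end TiltedProbability

section WidomRowlinson

variable {d : ℕ}

def neighbors (i : Site d) : Finset (Site d) :=
  (univ ×ˢ ({-1, 1} : Finset ℤ)).image fun p => Function.update i p.1 (i p.1 + p.2)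

theorem card_neighbors_le (i : Site d) : #(neighbors i) ≤ 2 * d :=
  card_image_le.trans (by simp [mul_comm])

theorem clashCount_eq_sum_neighbors (i : Site d) (σ : ℤ) (ω : Site d → Spin) :
    clashCount i σ ω = ∑ j ∈ neighbors i, if σ * (ω j : ℤ) = -1 then (1 : ℝ) else 0 := by
  have hinj : Set.InjOn (fun p : Fin d × ℤ => Function.update i p.1 (i p.1 + p.2))
      ((univ ×ˢ ({-1, 1} : Finset ℤ) : Finset (Fin d × ℤ)) : Set (Fin d × ℤ)) := by
    rintro ⟨k, ε⟩ hε ⟨k', ε'⟩ - h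
    have hε0 : ε ≠ 0 := by
      simp only [coe_product, Set.mem_prod, mem_coe, mem_insert, mem_singleton] at hε
      omega
    have hk := congrFun h k
    simp only [Function.update_self] at hk
    by_cases hkk : k = k'
    · subst hkk
      simp only [Function.update_self] at hk
      exact Prod.ext rfl (by omega)
    · rw [Function.update_of_ne hkk] at hk
      omega
  rw [neighbors, sum_image hinj, clashCount, sum_product]

variable {β : ℝ} {α : ℤ → ℝ} {i j : Site d} {ω η : Site d → Spin}

theorem clashCount_eq_of_not_mem_neighbors (hj : j ∉ neighbors i)
    (h : ∀ k, k ≠ j → ω k = η k) (σ : ℤ) : clashCount i σ ω = clashCount i σ η := by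
  simp only [clashCount_eq_sum_neighbors]
  exact sum_congr rfl fun k hk => by rw [h k (ne_of_mem_of_not_mem hk hj)]

theorem abs_clashCount_sub_le_one (h : ∀ k, k ≠ j → ω k = η k) (σ : ℤ) :
    |clashCount i σ ω - clashCount i σ η| ≤ 1 := by
  set c : (Site d → Spin) → Site d → ℝ := fun ζ k => if σ * (ζ k : ℤ) = -1 then 1 else 0
  have hc : ∀ ζ k, 0 ≤ c ζ k ∧ c ζ k ≤ 1 := fun ζ k => by simp only [c]; split_ifs <;> norm_num
  have hsingle : ∀ k ∈ neighbors i, c ω k - c η k = if k = j then c ω j - c η j else 0 :=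
    fun k _ => by
      split_ifs with hk
      · rw [hk]
      · simp [c, h k hk]
  simp only [clashCount_eq_sum_neighbors, ← sum_sub_distrib]
  rw [sum_congr rfl hsingle, sum_ite_eq']
  split_ifs
  · obtain ⟨h₁, h₂⟩ := hc ω j
    obtain ⟨h₃, h₄⟩ := hc η j
    exact abs_le.2 ⟨by linarith, by linarith⟩
  · simp

noncomputable def scPartition (β : ℝ) (α : ℤ → ℝ) (i : Site d) (ω : Site d → Spin) : ℝ :=
  ∑ σ ∈ Spin, α σ * exp (-β * clashCount i σ ω)

theorem scPartition_pos (hα : IsProbVec α) : 0 < scPartition β α i ω := by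
  obtain ⟨σ, hσ, hασ⟩ : ∃ σ ∈ Spin, (0 : ℝ) < α σ :=
    exists_lt_of_sum_lt (by simp [hα.2.2])
  exact sum_pos' (fun τ _ => mul_nonneg (hα.1 τ) (exp_pos _).le)
    ⟨σ, hσ, mul_pos hασ (exp_pos _)⟩

theorem scKernel_nonneg (hα : ∀ s, 0 ≤ α s) (i : Site d) (ω : Site d → Spin) (σ : ℤ) :
    0 ≤ scKernel β α i ω σ :=
  div_nonneg (mul_nonneg (hα σ) (exp_pos _).le)
    (sum_nonneg fun τ _ => mul_nonneg (hα τ) (exp_pos _).le)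

theorem sum_scKernel (hα : IsProbVec α) : ∑ σ ∈ Spin, scKernel β α i ω σ = 1 := by
  simp only [scKernel]
  rw [← sum_div]
  exact div_self (scPartition_pos hα).ne'

theorem scKernel_eq_exp_mul (hα : IsProbVec α) (σ : ℤ) :
    scKernel β α i η σ = exp (β * (clashCount i σ ω - clashCount i σ η)) *
      (scPartition β α i ω / scPartition β α i η) * scKernel β α i ω σ := by
  have hω := (scPartition_pos (β := β) (i := i) (ω := ω) hα).ne'
  have hη := (scPartition_pos (β := β) (i := i) (ω := η) hα).ne'
  have hexp : exp (-β * clashCount i σ η) =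
      exp (β * (clashCount i σ ω - clashCount i σ η)) * exp (-β * clashCount i σ ω) := by
    rw [← exp_add]
    ring_nf
  change _ / scPartition β α i η = _ * (_ / scPartition β α i ω)
  rw [hexp]
  field_simp

theorem tvDist_scKernel_le (hβ : 0 ≤ β) (hα : IsProbVec α) (h : ∀ k, k ≠ j → ω k = η k) :
    tvDist (scKernel β α i ω) (scKernel β α i η) ≤ β / 2 := by
  set R := scPartition β α i ω / scPartition β α i η
  have hR : 0 < R := div_pos (scPartition_pos hα) (scPartition_pos hα)
  have hshift : ∀ σ, -β ≤ β * (clashCount i σ ω - clashCount i σ η) ∧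
      β * (clashCount i σ ω - clashCount i σ η) ≤ β := fun σ => by
    obtain ⟨h₁, h₂⟩ := abs_le.1 (abs_clashCount_sub_le_one (i := i) h σ)
    constructor <;> nlinarith
  have hexp : exp (-β) * R * exp (2 * β) = exp β * R := by
    rw [mul_right_comm, ← exp_add]
    ring_nf
  have hsum := sum_abs_sub_le_of_mul_le_of_le_mul_exp (s := Spin)
    (p := scKernel β α i ω) (q := scKernel β α i η) (L := 2 * β)
    (fun σ _ => scKernel_nonneg hα.1 i ω σ) (sum_scKernel hα) (sum_scKernel hα)
    (mul_pos (exp_pos _) hR) (by positivity)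
    (fun σ _ => by
      rw [scKernel_eq_exp_mul (ω := ω) (η := η) hα σ]
      exact mul_le_mul_of_nonneg_right (mul_le_mul_of_nonneg_right
        (exp_le_exp.2 (hshift σ).1) hR.le) (scKernel_nonneg hα.1 i ω σ))
    (fun σ _ => by
      rw [scKernel_eq_exp_mul (ω := ω) (η := η) hα σ, hexp]
      exact mul_le_mul_of_nonneg_right (mul_le_mul_of_nonneg_right
        (exp_le_exp.2 (hshift σ).2) hR.le) (scKernel_nonneg hα.1 i ω σ))
  rw [tvDist]
  linarith

theorem dobMatrix_le (hβ : 0 ≤ β) (hα : IsProbVec α) (i j : Site d) :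
    dobMatrix β α i j ≤ β / 2 :=
  Real.sSup_le (by rintro _ ⟨ω, η, h, rfl⟩; exact tvDist_scKernel_le hβ hα h) (by positivity)

theorem dobMatrix_eq_zero_of_not_mem_neighbors (hj : j ∉ neighbors i) :
    dobMatrix β α i j = 0 := by
  refine le_antisymm (Real.sSup_le ?_ le_rfl) (Real.sSup_nonneg ?_)
  all_goals
    rintro _ ⟨ω, η, h, rfl⟩
    have hker : scKernel β α i ω = scKernel β α i η := by
      funext σ
      simp only [scKernel, clashCount_eq_of_not_mem_neighbors hj h]
    simp [tvDist, hker]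

theorem tsum_dobMatrix_le (hβ : 0 ≤ β) (hα : IsProbVec α) (i : Site d) :
    (∑' j : Site d, if j = i then 0 else dobMatrix β α i j) ≤ β * d := by
  rw [tsum_eq_sum (s := neighbors i) fun j hj => by
    simp [dobMatrix_eq_zero_of_not_mem_neighbors hj]]
  calc (∑ j ∈ neighbors i, if j = i then 0 else dobMatrix β α i j)
      ≤ ∑ _j ∈ neighbors i, β / 2 := sum_le_sum fun j _ => by
        split_ifs
        · positivity
        · exact dobMatrix_le hβ hα i j
    _ ≤ (2 * d : ℕ) * (β / 2) := by
      rw [sum_const, nsmul_eq_mul]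
      gcongr
      exact_mod_cast card_neighbors_le i
    _ = β * d := by push_cast; ring

end WidomRowlinson

theorem dobrushin_small_beta_general (d : ℕ) (β : ℝ) (hβ : 0 ≤ β)
    (hβd : β * d < 1) (α : ℤ → ℝ) (hα : IsProbVec α) :
    dobConstant β α d < 1 :=
  (ciSup_le fun i => tsum_dobMatrix_le hβ hα i).trans_lt hβd

/-- For `0 ≤ β` with `β·d < 1`, the soft-core Widom-Rowlinson model on `ℤ^d`
satisfies the Dobrushin uniqueness condition for every a priori measure `α`. -/
theorem dobrushin_small_beta (d : ℕ) (hd : 1 ≤ d) (β : ℝ) (hβ : 0 ≤ β)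
    (hβd : β * d < 1) (α : ℤ → ℝ) (hα : IsProbVec α) :
    dobConstant β α d < 1 :=
  dobrushin_small_beta_general d β hβ hβd α hα
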